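/- (Accountable safety with acknowledgments) If B and B' are conflicting blocks (neither B ≼ B' nor B' ≼ B) and there exist ack-finalized checkpoints C and C' with C.B = B and C'.B = B', then the set of validators that are E1-slashable, E2-slashable, or E3-slashable contains at least n/3 validators (i.e., 3·|{v : v is E1-, E2-, or E3-slashable}| ≥ n). -/
import Mathlib


/-- A checkpoint is a pair of a block and a slot. -/
structure Checkpoint (Block : Type*) where
  B : Block
  t : ℕ

/-- An FFG vote is a triple of a validator, a source checkpoint and a target checkpoint. -/
abbrev FFGVote (V Block : Type*) := V × Checkpoint Block × Checkpoint Block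

/-- Every FFG vote in the vote set satisfies `source.t < target.t` and `source.B ≼ target.B`. -/
def ValidVotes {V Block : Type*} [PartialOrder Block] (Votes : Set (FFGVote V Block)) : Prop :=
  ∀ p ∈ Votes, p.2.1.t < p.2.2.t ∧ p.2.1.B ≤ p.2.2.B

/-- There is a supermajority link `C₁ → C₂`: at least `2n/3` validators cast the FFG vote
`(v, C₁, C₂)`. -/
def SMLink {V Block : Type*} (n : ℕ) (Votes : Set (FFGVote V Block))
    (C₁ C₂ : Checkpoint Block) : Prop :=
  ∃ S : Finset V, 2 * n ≤ 3 * S.card ∧ ∀ v ∈ S, (v, C₁, C₂) ∈ Votes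

/-- A checkpoint `C` is justified if there is a chain of `k ≥ 0` supermajority links from the
genesis checkpoint `Cgen` to `C`. -/
def Justified {V Block : Type*} (n : ℕ) (Votes : Set (FFGVote V Block))
    (Cgen C : Checkpoint Block) : Prop :=
  Relation.ReflTransGen (SMLink n Votes) Cgen C

/-- A checkpoint `C` is finalized if it is justified and there is a supermajority link `C → C'`
with `C'.t = C.t + 1`. -/
def Finalized {V Block : Type*} (n : ℕ) (Votes : Set (FFGVote V Block))
    (Cgen C : Checkpoint Block) : Prop :=
  Justified n Votes Cgen C ∧ ∃ C' : Checkpoint Block, SMLink n Votes C C' ∧ C'.t = C.t + 1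

/-- `v` is E1-slashable (equivocation): `Votes` contains two distinct votes by `v` whose targets
have the same slot. -/
def E1Slashable {V Block : Type*} (Votes : Set (FFGVote V Block)) (v : V) : Prop :=
  ∃ p q : FFGVote V Block, p ∈ Votes ∧ q ∈ Votes ∧ p.1 = v ∧ q.1 = v ∧ p ≠ q ∧ p.2.2.t = q.2.2.t

/-- `v` is E2-slashable (surround voting): `Votes` contains votes `(v, C₁, C₂)` and `(v, C₃, C₄)`
with `C₃.t < C₁.t < C₂.t < C₄.t`. -/
def E2Slashable {V Block : Type*} (Votes : Set (FFGVote V Block)) (v : V) : Prop :=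
  ∃ C₁ C₂ C₃ C₄ : Checkpoint Block, (v, C₁, C₂) ∈ Votes ∧ (v, C₃, C₄) ∈ Votes ∧
    C₃.t < C₁.t ∧ C₁.t < C₂.t ∧ C₂.t < C₄.t

/-- There is a supermajority acknowledgment of `C`: at least `2n/3` validators `v` have
`(v, C) ∈ Acks`. -/
def SMAck {V Block : Type*} (n : ℕ) (Acks : Set (V × Checkpoint Block))
    (C : Checkpoint Block) : Prop :=
  ∃ S : Finset V, 2 * n ≤ 3 * S.card ∧ ∀ v ∈ S, (v, C) ∈ Acks

/-- `v` is E3-slashable: `Votes` contains a vote `(v, C₁, C₂)` and `Acks` contains `(v, C)` with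
`C₁.t < C.t < C₂.t`. -/
def E3Slashable {V Block : Type*} (Votes : Set (FFGVote V Block))
    (Acks : Set (V × Checkpoint Block)) (v : V) : Prop :=
  ∃ C₁ C₂ C : Checkpoint Block, (v, C₁, C₂) ∈ Votes ∧ (v, C) ∈ Acks ∧ C₁.t < C.t ∧ C.t < C₂.t

/-- A checkpoint is ack-finalized if it is justified and either is finalized or has a
supermajority acknowledgment. -/
def AckFinalized {V Block : Type*} (n : ℕ) (Votes : Set (FFGVote V Block))
    (Acks : Set (V × Checkpoint Block)) (Cgen C : Checkpoint Block) : Prop :=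
  Justified n Votes Cgen C ∧ (Finalized n Votes Cgen C ∨ SMAck n Acks C)

section AuxLemmas

variable {V Block : Type*} [PartialOrder Block]

lemma smlink_vote {n : ℕ} (hn : 0 < n) {Votes : Set (FFGVote V Block)}
    {C₁ C₂ : Checkpoint Block} (h : SMLink n Votes C₁ C₂) :
    ∃ v, (v, C₁, C₂) ∈ Votes := by
  obtain ⟨S, hcard, hS⟩ := h
  have hpos : 0 < S.card := by omega
  obtain ⟨v, hv⟩ := Finset.card_pos.mp hpos
  exact ⟨v, hS v hv⟩

lemma smlink_t_lt {n : ℕ} (hn : 0 < n) {Votes : Set (FFGVote V Block)}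
    (hvalid : ValidVotes Votes)
    {C₁ C₂ : Checkpoint Block} (h : SMLink n Votes C₁ C₂) : C₁.t < C₂.t := by
  obtain ⟨v, hv⟩ := smlink_vote hn h
  exact (hvalid _ hv).1

lemma chain_block_le {n : ℕ} (hn : 0 < n) {Votes : Set (FFGVote V Block)}
    (hvalid : ValidVotes Votes)
    {D E : Checkpoint Block} (h : Relation.ReflTransGen (SMLink n Votes) D E) :
    D.B ≤ E.B := by
  induction h with
  | refl => exact le_refl _
  | @tail b c hab hbc ih =>
    obtain ⟨v, hv⟩ := smlink_vote hn hbc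
    exact ih.trans (hvalid _ hv).2

/-- Any justified checkpoint other than genesis has an incoming supermajority link. -/
lemma justified_incoming {n : ℕ} {Votes : Set (FFGVote V Block)}
    {Cgen C : Checkpoint Block} (h : Justified n Votes Cgen C) (hne : C ≠ Cgen) :
    ∃ D, SMLink n Votes D C := by
  rcases (Relation.ReflTransGen.cases_tail h) with h' | ⟨D, _, hl⟩
  · exact absurd h'.symm (Ne.symm hne)
  · exact ⟨D, hl⟩

/-- Crossing lemma: if a justified chain starts at or below slot `c` and ends above it,
some link crosses slot `c`. -/
lemma crossing {n : ℕ} {Votes : Set (FFGVote V Block)} {Cgen : Checkpoint Block} (c : ℕ)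
    {C' : Checkpoint Block} (h : Relation.ReflTransGen (SMLink n Votes) Cgen C') :
    c < C'.t → Cgen.t ≤ c →
    ∃ D D' : Checkpoint Block, Relation.ReflTransGen (SMLink n Votes) Cgen D ∧
      SMLink n Votes D D' ∧ Relation.ReflTransGen (SMLink n Votes) D' C' ∧
      D.t ≤ c ∧ c < D'.t := by
  induction h with
  | refl => intro h1 h2; omega
  | @tail b e hab hbe ih =>
    intro h1 h2
    by_cases hb : b.t ≤ c
    · exact ⟨b, e, hab, hbe, Relation.ReflTransGen.refl, hb, h1⟩
    · obtain ⟨D, D', h1', h2', h3', h4', h5'⟩ := ih (by omega) h2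
      exact ⟨D, D', h1', h2', h3'.tail hbe, h4', h5'⟩

/-- Two supermajority sets intersect in at least `n/3` validators. -/
lemma quorum_count {V : Type*} [Fintype V] {n : ℕ} (hn : Fintype.card V = n)
    (S₁ S₂ : Finset V) (h1 : 2 * n ≤ 3 * S₁.card) (h2 : 2 * n ≤ 3 * S₂.card)
    (T : Set V) (hsub : ∀ v, v ∈ S₁ → v ∈ S₂ → v ∈ T) :
    n ≤ 3 * T.ncard := by
  classical
  have hu : (S₁ ∪ S₂).card ≤ n := hn ▸ Finset.card_le_univ _
  have hadd : (S₁ ∪ S₂).card + (S₁ ∩ S₂).card = S₁.card + S₂.card :=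
    Finset.card_union_add_card_inter S₁ S₂
  have hsub' : ↑(S₁ ∩ S₂) ⊆ T := by
    intro v hv
    simp only [Finset.coe_inter, Set.mem_inter_iff, Finset.mem_coe] at hv
    exact hsub v hv.1 hv.2
  have hcard : (S₁ ∩ S₂).card ≤ T.ncard := by
    calc (S₁ ∩ S₂).card = (↑(S₁ ∩ S₂) : Set V).ncard := (Set.ncard_coe_finset _).symm
    _ ≤ T.ncard := Set.ncard_le_ncard hsub' (Set.toFinite T)
  omega

end AuxLemmas

/-- Main auxiliary lemma, assuming `C.t ≤ C'.t`. -/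
lemma accountable_safety_aux
    {V Block : Type*} [Fintype V] [PartialOrder Block]
    (n : ℕ) (hn : Fintype.card V = n) (hn0 : 0 < n)
    (Votes : Set (FFGVote V Block)) (hvalid : ValidVotes Votes)
    (Acks : Set (V × Checkpoint Block))
    (Bgen : Block)
    (C C' : Checkpoint Block)
    (hC : AckFinalized n Votes Acks ⟨Bgen, 0⟩ C)
    (hC' : AckFinalized n Votes Acks ⟨Bgen, 0⟩ C')
    (hconf : ¬ C.B ≤ C'.B ∧ ¬ C'.B ≤ C.B)
    (hle : C.t ≤ C'.t) :
    n ≤ 3 * {v : V | E1Slashable Votes v ∨ E2Slashable Votes v ∨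
      E3Slashable Votes Acks v}.ncard := by
  set Cgen : Checkpoint Block := ⟨Bgen, 0⟩ with hCgen
  set T : Set V := {v : V | E1Slashable Votes v ∨ E2Slashable Votes v ∨
      E3Slashable Votes Acks v} with hT
  -- C and C' are not genesis
  have hCne : C ≠ Cgen := by
    intro h
    exact hconf.1 (h ▸ chain_block_le hn0 hvalid hC'.1)
  have hC'ne : C' ≠ Cgen := by
    intro h
    exact hconf.2 (h ▸ chain_block_le hn0 hvalid hC.1)
  -- positive slots
  have hCt : 0 < C.t := by
    obtain ⟨D, hD⟩ := justified_incoming hC.1 hCne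
    have := smlink_t_lt hn0 hvalid hD
    omega
  rcases Nat.lt_or_ge C.t C'.t with hlt | hge
  · -- C.t < C'.t : use the crossing link on C''s chain
    obtain ⟨D, D', hD, hDD', hD'C', hDt, hD't⟩ :=
      crossing C.t hC'.1 hlt (by simp [hCgen])
    have hDneC : D ≠ C := by
      intro h
      exact hconf.1 (h ▸ chain_block_le hn0 hvalid (hD'C'.head hDD'))
    obtain ⟨S₂, hS₂card, hS₂⟩ := hDD'
    rcases Nat.lt_or_ge D.t C.t with hDlt | hDge
    · -- D.t < C.t : use finalization or ack of C
      rcases hC.2 with hfin | hack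
      · obtain ⟨_, C'', ⟨S₁, hS₁card, hS₁⟩, hC''t⟩ := hfin
        rcases Nat.lt_or_ge (C.t + 1) D'.t with h1 | h1
        · -- surround vote: E2
          refine quorum_count hn S₁ S₂ hS₁card hS₂card T (fun v hv1 hv2 => ?_)
          exact Or.inr (Or.inl ⟨C, C'', D, D', hS₁ v hv1, hS₂ v hv2, hDlt, by omega, by omega⟩)
        · -- D'.t = C.t + 1 : two targets at the same slot, E1
          have hD't' : D'.t = C.t + 1 := by omega
          refine quorum_count hn S₁ S₂ hS₁card hS₂card T (fun v hv1 hv2 => ?_)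
          refine Or.inl ⟨(v, C, C''), (v, D, D'), hS₁ v hv1, hS₂ v hv2, rfl, rfl, ?_, by
            simp only; omega⟩
          intro h
          apply hDneC
          have : C = D := congrArg (fun p => p.2.1) h
          exact this.symm
      · obtain ⟨S₁, hS₁card, hS₁⟩ := hack
        refine quorum_count hn S₁ S₂ hS₁card hS₂card T (fun v hv1 hv2 => ?_)
        exact Or.inr (Or.inr ⟨D, D', C, hS₂ v hv2, hS₁ v hv1, hDlt, hD't⟩)
    · -- D.t = C.t, D ≠ C : equivocation E1
      have hDtC : D.t = C.t := by omega
      have hDne : D ≠ Cgen := by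
        intro h; rw [h] at hDtC; simp [hCgen] at hDtC; omega
      obtain ⟨E, SE, hSEcard, hSE⟩ := justified_incoming hD hDne
      obtain ⟨A, SA, hSAcard, hSA⟩ := justified_incoming hC.1 hCne
      refine quorum_count hn SE SA hSEcard hSAcard T (fun v hv1 hv2 => ?_)
      refine Or.inl ⟨(v, E, D), (v, A, C), hSE v hv1, hSA v hv2, rfl, rfl, ?_, by
        simp only; omega⟩
      intro h
      exact hDneC (congrArg (fun p => p.2.2) h)
  · -- C.t = C'.t : both have incoming links, targets differ, E1
    have hteq : C.t = C'.t := by omega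
    have hne : C ≠ C' := by
      intro h; exact hconf.1 (h ▸ le_refl _)
    obtain ⟨A, SA, hSAcard, hSA⟩ := justified_incoming hC.1 hCne
    obtain ⟨A', SA', hSA'card, hSA'⟩ := justified_incoming hC'.1 hC'ne
    refine quorum_count hn SA SA' hSAcard hSA'card T (fun v hv1 hv2 => ?_)
    refine Or.inl ⟨(v, A, C), (v, A', C'), hSA v hv1, hSA' v hv2, rfl, rfl, ?_, by
      simp only; omega⟩
    intro h
    exact hne (congrArg (fun p => p.2.2) h)

/-- Accountable safety with acknowledgments: if two conflicting blocks are both ack-finalized,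
then at least `n/3` validators are E1-, E2-, or E3-slashable. -/
theorem accountable_safety_with_acks
    {V Block : Type*} [Fintype V] [PartialOrder Block]
    (n : ℕ) (hn : Fintype.card V = n)
    (Votes : Set (FFGVote V Block)) (hvalid : ValidVotes Votes)
    (Acks : Set (V × Checkpoint Block))
    (Bgen : Block) (B B' : Block)
    (hconf : ¬ B ≤ B' ∧ ¬ B' ≤ B)
    (C C' : Checkpoint Block)
    (hC : AckFinalized n Votes Acks ⟨Bgen, 0⟩ C)
    (hC' : AckFinalized n Votes Acks ⟨Bgen, 0⟩ C')
    (hB : C.B = B) (hB' : C'.B = B') :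
    n ≤ 3 * {v : V | E1Slashable Votes v ∨ E2Slashable Votes v ∨
      E3Slashable Votes Acks v}.ncard := by
  rcases Nat.eq_zero_or_pos n with hn0 | hn0
  · omega
  subst hB hB'
  rcases le_total C.t C'.t with hle | hle
  · exact accountable_safety_aux n hn hn0 Votes hvalid Acks Bgen C C' hC hC' hconf hle
  · exact accountable_safety_aux n hn hn0 Votes hvalid Acks Bgen C' C hC' hC
      ⟨hconf.2, hconf.1⟩ hle
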